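/- For every R ∈ SO(3) and all x, y ∈ ℝ³, with E(R) := (1/2)(tr(R)·I − R), the following bounds hold: xᵀ(I − E(R))x ≤ 2|R|_I²‖x‖² and xᵀ(I − E(R))y ≤ (2|R|_I² + √2·|R|_I)‖x‖‖y‖. -/

import Mathlib

open Matrix

/-- `R ∈ SO(3)`: `R Rᵀ = I` and `det R = 1`. -/
def IsSO3 (R : Matrix (Fin 3) (Fin 3) ℝ) : Prop := R * Rᵀ = 1 ∧ R.det = 1

/-- Squared normalized Euclidean distance on SO(3): `|R|_I² = (1/4) tr(I - R)`. -/
noncomputable def distI2 (R : Matrix (Fin 3) (Fin 3) ℝ) : ℝ :=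
  (1/4) * Matrix.trace (1 - R)

/-- `E(R) = (1/2)(tr(R)·I - R)`. -/
noncomputable def eMat (R : Matrix (Fin 3) (Fin 3) ℝ) : Matrix (Fin 3) (Fin 3) ℝ :=
  (1/2 : ℝ) • (Matrix.trace R • (1 : Matrix (Fin 3) (Fin 3) ℝ) - R)

/-- Euclidean norm on `ℝ³`. -/
noncomputable def vnorm (x : Fin 3 → ℝ) : ℝ := Real.sqrt (x ⬝ᵥ x)

/-!
With `d = |R|_I²` one has `I - E(R) = 2d·I - (1/2)(I - R)`. For orthogonal `R`,
`(I - R)(I - R)ᵀ = (I - R) + (I - R)ᵀ`. Hence the quadratic form of `I - R` is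
`(1/2)‖(I - R)ᵀx‖² ≥ 0`, which gives the first bound, and the Frobenius norm of `I - R` is
`√(2 tr(I - R)) = 2√2·|R|_I`, which by Cauchy–Schwarz bounds `xᵀ(I - R)y` and gives the second.
-/

section CauchySchwarz

variable {n : Type*} [Fintype n]

theorem dotProduct_self_nonneg (x : n → ℝ) : 0 ≤ x ⬝ᵥ x :=
  Finset.sum_nonneg fun _ _ => mul_self_nonneg _

theorem dotProduct_sq_le (x y : n → ℝ) : (x ⬝ᵥ y) ^ 2 ≤ (x ⬝ᵥ x) * (y ⬝ᵥ y) := by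
  simpa only [dotProduct, sq] using Finset.sum_mul_sq_le_sq_mul_sq Finset.univ x y

theorem abs_dotProduct_le (x y : n → ℝ) : |x ⬝ᵥ y| ≤ √(x ⬝ᵥ x) * √(y ⬝ᵥ y) := by
  rw [← Real.sqrt_mul (dotProduct_self_nonneg x)]
  exact Real.abs_le_sqrt (dotProduct_sq_le x y)

end CauchySchwarz

namespace Matrix

section Frobenius

variable {m n : Type*} [Fintype m] [Fintype n]

theorem trace_mul_transpose_self (A : Matrix n m ℝ) : trace (A * Aᵀ) = ∑ i, A i ⬝ᵥ A i :=
  rfl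

theorem mulVec_dotProduct_mulVec_le (A : Matrix n m ℝ) (v : m → ℝ) :
    (A *ᵥ v) ⬝ᵥ (A *ᵥ v) ≤ trace (A * Aᵀ) * (v ⬝ᵥ v) := by
  rw [trace_mul_transpose_self, Finset.sum_mul]
  exact Finset.sum_le_sum fun i _ => by simpa [sq, mulVec] using dotProduct_sq_le (A i) v

theorem abs_dotProduct_mulVec_le (A : Matrix n m ℝ) (x : n → ℝ) (y : m → ℝ) :
    |x ⬝ᵥ A *ᵥ y| ≤ √(trace (A * Aᵀ)) * √(x ⬝ᵥ x) * √(y ⬝ᵥ y) := by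
  calc |x ⬝ᵥ A *ᵥ y| ≤ √(x ⬝ᵥ x) * √((A *ᵥ y) ⬝ᵥ (A *ᵥ y)) := abs_dotProduct_le x _
    _ ≤ √(x ⬝ᵥ x) * √(trace (A * Aᵀ) * (y ⬝ᵥ y)) := by
      gcongr; exact mulVec_dotProduct_mulVec_le A y
    _ = √(trace (A * Aᵀ)) * √(x ⬝ᵥ x) * √(y ⬝ᵥ y) := by
      rw [Real.sqrt_mul' _ (dotProduct_self_nonneg y)]; ring

end Frobenius

section Orthogonal

variable {n : Type*} [Fintype n] [DecidableEq n]

theorem one_sub_mul_transpose_one_sub {α : Type*} [Ring α] {R : Matrix n n α}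
    (hR : R * Rᵀ = 1) : (1 - R) * (1 - R)ᵀ = (1 - R) + (1 - R)ᵀ := by
  simp only [transpose_sub, transpose_one, sub_mul, mul_sub, one_mul, mul_one, hR]
  abel

variable {R : Matrix n n ℝ}

theorem trace_one_sub_mul_transpose (hR : R * Rᵀ = 1) :
    trace ((1 - R) * (1 - R)ᵀ) = 2 * trace (1 - R) := by
  rw [one_sub_mul_transpose_one_sub hR, trace_add, trace_transpose, two_mul]

theorem trace_one_sub_nonneg (hR : R * Rᵀ = 1) : 0 ≤ trace (1 - R) := by
  have h := trace_one_sub_mul_transpose hR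
  rw [trace_mul_transpose_self] at h
  linarith [Finset.sum_nonneg fun i (_ : i ∈ Finset.univ) => dotProduct_self_nonneg ((1 - R) i)]

theorem dotProduct_one_sub_mulVec_self (hR : R * Rᵀ = 1) (x : n → ℝ) :
    x ⬝ᵥ (1 - R) *ᵥ x = (1 / 2) * (((1 - R)ᵀ *ᵥ x) ⬝ᵥ ((1 - R)ᵀ *ᵥ x)) := by
  have hsym : x ⬝ᵥ (1 - R)ᵀ *ᵥ x = x ⬝ᵥ (1 - R) *ᵥ x := by
    rw [dotProduct_mulVec, vecMul_transpose, dotProduct_comm]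
  have hsq : x ⬝ᵥ ((1 - R) * (1 - R)ᵀ) *ᵥ x = ((1 - R)ᵀ *ᵥ x) ⬝ᵥ ((1 - R)ᵀ *ᵥ x) := by
    rw [← mulVec_mulVec, dotProduct_mulVec, ← mulVec_transpose]
  rw [one_sub_mul_transpose_one_sub hR, add_mulVec, dotProduct_add, hsym] at hsq
  linarith

end Orthogonal

end Matrix

theorem one_sub_eMat (R : Matrix (Fin 3) (Fin 3) ℝ) :
    1 - eMat R = (2 * distI2 R) • (1 : Matrix (Fin 3) (Fin 3) ℝ) - (1 / 2 : ℝ) • (1 - R) := by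
  rw [eMat, distI2, trace_sub, trace_one, Fintype.card_fin]
  module

theorem dotProduct_one_sub_eMat_mulVec (R : Matrix (Fin 3) (Fin 3) ℝ) (x y : Fin 3 → ℝ) :
    x ⬝ᵥ (1 - eMat R) *ᵥ y = 2 * distI2 R * (x ⬝ᵥ y) - 1 / 2 * (x ⬝ᵥ (1 - R) *ᵥ y) := by
  rw [one_sub_eMat, sub_mulVec, smul_mulVec, smul_mulVec, one_mulVec, dotProduct_sub,
    dotProduct_smul, dotProduct_smul, smul_eq_mul, smul_eq_mul]

theorem distI2_nonneg {R : Matrix (Fin 3) (Fin 3) ℝ} (hR : R * Rᵀ = 1) : 0 ≤ distI2 R := by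
  unfold distI2
  linarith [trace_one_sub_nonneg hR]

theorem sqrt_trace_one_sub_mul_transpose {R : Matrix (Fin 3) (Fin 3) ℝ} (hR : R * Rᵀ = 1) :
    √(trace ((1 - R) * (1 - R)ᵀ)) = 2 * (√2 * √(distI2 R)) := by
  have h8 : 2 * trace (1 - R) = 2 ^ 2 * (2 * distI2 R) := by
    unfold distI2
    ring
  rw [trace_one_sub_mul_transpose hR, h8, Real.sqrt_mul' _ (by linarith [distI2_nonneg hR]),
    Real.sqrt_sq zero_le_two, Real.sqrt_mul zero_le_two]

theorem stmt9 (R : Matrix (Fin 3) (Fin 3) ℝ) (hR : IsSO3 R) (x y : Fin 3 → ℝ) :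
    x ⬝ᵥ ((1 - eMat R).mulVec x) ≤ 2 * distI2 R * (vnorm x)^2 ∧
    x ⬝ᵥ ((1 - eMat R).mulVec y) ≤
      (2 * distI2 R + Real.sqrt 2 * Real.sqrt (distI2 R)) * vnorm x * vnorm y := by
  constructor
  · have hform := dotProduct_one_sub_mulVec_self hR.1 x
    have hsq := dotProduct_self_nonneg ((1 - R)ᵀ *ᵥ x)
    rw [dotProduct_one_sub_eMat_mulVec, vnorm, Real.sq_sqrt (dotProduct_self_nonneg x)]
    linarith
  · have hxy := mul_le_mul_of_nonneg_left (le_of_abs_le (abs_dotProduct_le x y))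
      (mul_nonneg zero_le_two (distI2_nonneg hR.1))
    have hA := neg_le_of_abs_le (abs_dotProduct_mulVec_le (1 - R) x y)
    rw [sqrt_trace_one_sub_mul_transpose hR.1] at hA
    rw [dotProduct_one_sub_eMat_mulVec]
    unfold vnorm
    linarith
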